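/- Let d be an odd prime, k ≠ k', ω = exp(2πi/d), and define c^{(k,k')}_{mnm'n'} = Σ_{j=0}^{d-1} c^{(k,k')*}_{jm'} c^{(k,k')}_{jn'} c^{(k,k')}_{jm} c^{(k,k')*}_{jn} where c^{(k,k')}_{jm} = (1/√d)Σ_p ω^{p(j−m)+p²(k'−k)}. Then c^{(k,k')}_{mnm'n'} = ω^{ψ(k'−k)(m'²−m²−n'²+n²)} · Σ_j ω^{2ψ(k'−k)·j·(m−m'−n+n')}, and hence |c^{(k,k')}_{mnm'n'}| = d if (m−m'−n+n') ≡ 0 (mod d) and 0 otherwise. -/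

import Mathlib

/-- `c^{(k,k')}_{jm} = (1/√d) ∑_p ω^{p(j−m)+p²(k'−k)}`. -/
noncomputable def cOne (d : ℕ) (k k' : Fin d) (j m : Fin d) : ℂ :=
  ((1 / Real.sqrt d : ℝ) : ℂ) *
    ∑ p : Fin d, Complex.exp (2 * Real.pi * Complex.I *
      ((((p.val : ℤ) * ((j.val : ℤ) - (m.val : ℤ)) +
          (p.val : ℤ) ^ 2 * ((k'.val : ℤ) - (k.val : ℤ)) : ℤ) : ℂ)) / d)

/-- `c^{(k,k')}_{mnm'n'} = ∑_j c*_{jm'} c_{jn'} c_{jm} c*_{jn}`. -/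
noncomputable def cFour (d : ℕ) (k k' : Fin d) (m n m' n' : Fin d) : ℂ :=
  ∑ j : Fin d, (starRingEnd ℂ) (cOne d k k' j m') * cOne d k k' j n' *
    cOne d k k' j m * (starRingEnd ℂ) (cOne d k k' j n)

/-! Each `c_{jm}` is `d^{-1/2}` times the quadratic Gauss sum `G(u) = ∑_p ω^{pu + p²Δ}` at
`u = j - m`, with `Δ = k' - k`. Expanding `conj (G u) * G v` and shifting `q = p + t` leaves
`∑_t ω^{tv + t²Δ} ∑_p ω^{p(v - u + 2tΔ)}`; by orthogonality only `t = 2ψ(u - v)` survives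
(this is where `4ψΔ ≡ 1` enters), giving `d ω^{ψ(u² - v²)}`. Multiplying two such pairs makes
`c_{mnm'n'}` a constant phase times a linear character sum `∑_j ω^{2ψ j S}`, which is `d` or `0`
according as `S ≡ 0`, because `2ψ` is a unit mod `d`. -/

open Finset

namespace AddChar

variable {R : Type*} [CommRing R] [Fintype R] [DecidableEq R]

noncomputable def quadGaussSum (χ : AddChar R ℂ) (c u : R) : ℂ :=
  ∑ p, χ (p * u + p ^ 2 * c)

theorem conj_quadGaussSum_mul_quadGaussSum {χ : AddChar R ℂ} (hχ : χ.IsPrimitive) {a c : R}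
    (hac : 4 * a * c = 1) (u v : R) :
    starRingEnd ℂ (quadGaussSum χ c u) * quadGaussSum χ c v
      = Fintype.card R * χ (a * (u ^ 2 - v ^ 2)) := by
  have hzero : ∀ t, v - u + 2 * t * c = 0 ↔ t = 2 * a * (u - v) := fun t ↦ by
    constructor
    · intro h; linear_combination 2 * a * h - t * hac
    · rintro rfl; linear_combination (u - v) * hac
  calc starRingEnd ℂ (quadGaussSum χ c u) * quadGaussSum χ c v
      = ∑ t, ∑ p, χ (p * (v - u + 2 * t * c)) * χ (t * v + t ^ 2 * c) := by
        rw [quadGaussSum, quadGaussSum, map_sum, sum_mul_sum]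
        refine (sum_congr rfl fun p _ ↦ ?_).trans sum_comm
        refine (Fintype.sum_equiv (Equiv.addRight p) _ _ fun t ↦ ?_).symm
        rw [← map_neg_eq_conj, ← map_add_eq_mul, ← map_add_eq_mul, Equiv.coe_addRight]
        ring_nf
    _ = ∑ t, if t = 2 * a * (u - v) then Fintype.card R * χ (t * v + t ^ 2 * c) else 0 := by
        refine sum_congr rfl fun t _ ↦ ?_
        rw [← sum_mul, sum_mulShift _ hχ, if_congr (hzero t) rfl rfl, Nat.cast_ite, Nat.cast_zero,
          ite_mul, zero_mul]
    _ = Fintype.card R * χ (a * (u ^ 2 - v ^ 2)) := by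
        rw [sum_ite_eq' univ, if_pos (mem_univ _)]
        congr 2
        linear_combination (a * (u - v) ^ 2) * hac

end AddChar

theorem Fin.sum_natCast_zmod {M : Type*} [AddCommMonoid M] (d : ℕ) [NeZero d] (f : ZMod d → M) :
    ∑ p : Fin d, f p.val = ∑ x : ZMod d, f x := by
  refine Fintype.sum_bijective _ ?_ _ _ fun _ ↦ rfl
  rw [Fintype.bijective_iff_injective_and_card, ZMod.card, Fintype.card_fin]
  refine ⟨fun p q h ↦ Fin.ext ?_, rfl⟩
  simpa [ZMod.natCast_eq_natCast_iff', Nat.mod_eq_of_lt] using h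

open AddChar ZMod

theorem cOne_eq_quadGaussSum (d : ℕ) [NeZero d] (k k' j m : Fin d) :
    cOne d k k' j m = ((1 / Real.sqrt d : ℝ) : ℂ) *
      quadGaussSum stdAddChar ((k'.val : ZMod d) - (k.val : ZMod d))
        ((j.val : ZMod d) - (m.val : ZMod d)) := by
  rw [cOne, quadGaussSum, ← Fin.sum_natCast_zmod]
  simp_rw [← stdAddChar_coe]
  push_cast
  rfl

theorem conj_cOne_mul_cOne (d : ℕ) [NeZero d] (k k' : Fin d) {ψ : ZMod d}
    (hψ : 4 * ψ * ((k'.val : ZMod d) - (k.val : ZMod d)) = 1) (j a b : Fin d) :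
    starRingEnd ℂ (cOne d k k' j a) * cOne d k k' j b
      = stdAddChar (ψ * (((j.val : ZMod d) - (a.val : ZMod d)) ^ 2 -
          ((j.val : ZMod d) - (b.val : ZMod d)) ^ 2)) := by
  have hd : ((1 / Real.sqrt d : ℝ) : ℂ) * ((1 / Real.sqrt d : ℝ) : ℂ) * d = 1 := by
    rw [← Complex.ofReal_mul, div_mul_div_comm, one_mul, Real.mul_self_sqrt (Nat.cast_nonneg d)]
    push_cast
    exact one_div_mul_cancel (NeZero.ne _)
  rw [cOne_eq_quadGaussSum, cOne_eq_quadGaussSum, map_mul, Complex.conj_ofReal, mul_mul_mul_comm,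
    conj_quadGaussSum_mul_quadGaussSum (isPrimitive_stdAddChar d) hψ, ZMod.card, ← mul_assoc, hd,
    one_mul]

theorem cFour_eq (d : ℕ) [NeZero d] (k k' : Fin d) {ψ : ZMod d}
    (hψ : 4 * ψ * ((k'.val : ZMod d) - (k.val : ZMod d)) = 1) (m n m' n' : Fin d) :
    cFour d k k' m n m' n'
      = stdAddChar (ψ * ((m'.val : ZMod d) ^ 2 - (m.val : ZMod d) ^ 2 - (n'.val : ZMod d) ^ 2 +
          (n.val : ZMod d) ^ 2)) *
        ∑ j : Fin d, stdAddChar (2 * ψ * (j.val : ZMod d) *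
          ((m.val : ZMod d) - (m'.val : ZMod d) - (n.val : ZMod d) + (n'.val : ZMod d))) := by
  rw [cFour, mul_sum]
  refine sum_congr rfl fun j _ ↦ ?_
  rw [mul_right_comm _ (cOne d k k' j n'), mul_assoc, mul_comm (cOne d k k' j n'),
    conj_cOne_mul_cOne d k k' hψ, conj_cOne_mul_cOne d k k' hψ, ← map_add_eq_mul,
    ← map_add_eq_mul]
  ring_nf

theorem Fin.sum_stdAddChar_mul (d : ℕ) [NeZero d] (b : ZMod d) :
    ∑ j : Fin d, stdAddChar ((j.val : ZMod d) * b) = if b = 0 then (d : ℂ) else 0 := by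
  rw [Fin.sum_natCast_zmod d fun x ↦ stdAddChar (x * b), sum_mulShift _ (isPrimitive_stdAddChar d),
    ZMod.card, Nat.cast_ite, Nat.cast_zero]

theorem stmt_16_general (d : ℕ) (k k' : Fin d)
    (ψ : ℤ) (hψ : (4 * ψ * ((k'.val : ℤ) - (k.val : ℤ))) % (d : ℤ) = 1 % (d : ℤ))
    (m n m' n' : Fin d) :
    cFour d k k' m n m' n'
      = Complex.exp (2 * Real.pi * Complex.I *
          (((ψ * ((m'.val : ℤ) ^ 2 - (m.val : ℤ) ^ 2 - (n'.val : ℤ) ^ 2 +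
              (n.val : ℤ) ^ 2) : ℤ) : ℂ)) / d) *
        ∑ j : Fin d, Complex.exp (2 * Real.pi * Complex.I *
          (((2 * ψ * (j.val : ℤ) * ((m.val : ℤ) - (m'.val : ℤ) - (n.val : ℤ) +
              (n'.val : ℤ)) : ℤ) : ℂ)) / d) ∧
    ‖cFour d k k' m n m' n'‖
      = if ((m.val : ℤ) - (m'.val : ℤ) - (n.val : ℤ) + (n'.val : ℤ)) % (d : ℤ) = 0
        then (d : ℝ) else 0 := by
  have : NeZero d := NeZero.of_pos m.pos
  have hψ' : 4 * (ψ : ZMod d) * ((k'.val : ZMod d) - (k.val : ZMod d)) = 1 := by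
    simpa using (ZMod.intCast_eq_intCast_iff' _ _ d).mpr hψ
  have h2ψ : IsUnit (2 * (ψ : ZMod d)) :=
    IsUnit.of_mul_eq_one (2 * ((k'.val : ZMod d) - (k.val : ZMod d))) (by linear_combination hψ')
  simp_rw [← stdAddChar_coe, ← Int.dvd_iff_emod_eq_zero, ← ZMod.intCast_zmod_eq_zero_iff_dvd]
  push_cast
  refine ⟨cFour_eq d k k' hψ' m n m' n', ?_⟩
  rw [cFour_eq d k k' hψ', norm_mul, AddChar.norm_apply, one_mul]
  set S : ZMod d := (m.val : ZMod d) - (m'.val : ZMod d) - (n.val : ZMod d) + (n'.val : ZMod d)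
  have hS (j : Fin d) : 2 * (ψ : ZMod d) * j.val * S = j.val * (2 * ψ * S) := by ring
  simp_rw [hS, Fin.sum_stdAddChar_mul, h2ψ.mul_right_eq_zero]
  split_ifs <;> simp

theorem stmt_16 (d : ℕ) (hd : d.Prime) (hodd : Odd d) (k k' : Fin d) (hkk : k ≠ k')
    (ψ : ℤ) (hψ : (4 * ψ * ((k'.val : ℤ) - (k.val : ℤ))) % (d : ℤ) = 1 % (d : ℤ))
    (m n m' n' : Fin d) :
    cFour d k k' m n m' n'
      = Complex.exp (2 * Real.pi * Complex.I *
          (((ψ * ((m'.val : ℤ) ^ 2 - (m.val : ℤ) ^ 2 - (n'.val : ℤ) ^ 2 +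
              (n.val : ℤ) ^ 2) : ℤ) : ℂ)) / d) *
        ∑ j : Fin d, Complex.exp (2 * Real.pi * Complex.I *
          (((2 * ψ * (j.val : ℤ) * ((m.val : ℤ) - (m'.val : ℤ) - (n.val : ℤ) +
              (n'.val : ℤ)) : ℤ) : ℂ)) / d) ∧
    ‖cFour d k k' m n m' n'‖
      = if ((m.val : ℤ) - (m'.val : ℤ) - (n.val : ℤ) + (n'.val : ℤ)) % (d : ℤ) = 0
        then (d : ℝ) else 0 :=
  stmt_16_general d k k' ψ hψ m n m' n'
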